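/- (Convergence of the side and diameter numbers to the dyad (side, diameter) of the square.) The sequence of ratios (q n : ℝ) / (p n) tends to Real.sqrt 2 as n → ∞, i.e. Filter.Tendsto (fun n => (q n : ℝ) / (p n)) Filter.atTop (nhds (Real.sqrt 2)). -/
import Mathlib


mutual
/-- The Pythagorean side numbers. -/
def p : ℕ → ℕ
  | 0 => 1
  | n + 1 => p n + q n
/-- The Pythagorean diameter numbers. -/
def q : ℕ → ℕ
  | 0 => 1
  | n + 1 => 2 * p n + q n
end

lemma q_ge_one : ∀ n, 1 ≤ q n := by
  intro n
  induction n with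
  | zero => simp [q]
  | succ n ih => rw [q]; omega

lemma p_ge : ∀ n, n + 1 ≤ p n := by
  intro n
  induction n with
  | zero => simp [p]
  | succ n ih => have := q_ge_one n; rw [p]; omega

lemma pell : ∀ n, ((q n : ℤ))^2 - 2 * ((p n : ℤ))^2 = (-1)^(n+1) := by
  intro n
  induction n with
  | zero => simp [p, q]
  | succ n ih =>
    have h : ((-1:ℤ))^(n+1+1) = -(-1)^(n+1) := by ring
    rw [q, p, h]
    push_cast
    linear_combination (-1 : ℤ) * ih

/-- The ratios of the diameter to the side numbers tend to √2. -/
theorem ratio_tendsto_sqrt_two :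
    Filter.Tendsto (fun n => (q n : ℝ) / (p n)) Filter.atTop (nhds (Real.sqrt 2)) := by
  have hs1 : (1:ℝ) ≤ Real.sqrt 2 := by
    rw [show (1:ℝ) = Real.sqrt 1 by simp]
    exact Real.sqrt_le_sqrt (by norm_num)
  have key : ∀ n, |(q n : ℝ) / (p n) - Real.sqrt 2| ≤ 1 / (n + 1) := by
    intro n
    have hp : ((n:ℝ) + 1) ≤ (p n : ℝ) := by exact_mod_cast p_ge n
    have hp1 : (1:ℝ) ≤ (p n : ℝ) := by
      have := p_ge n; exact_mod_cast Nat.one_le_iff_ne_zero.mpr (by omega)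
    have hq : (1:ℝ) ≤ (q n : ℝ) := by exact_mod_cast q_ge_one n
    have hpell : ((q n : ℝ))^2 - 2 * ((p n : ℝ))^2 = (-1:ℝ)^(n+1) := by
      exact_mod_cast pell n
    have hsq : Real.sqrt 2 ^ 2 = 2 := Real.sq_sqrt (by norm_num)
    have hpos : 0 < (q n : ℝ) + Real.sqrt 2 * (p n : ℝ) := by nlinarith
    have h1 : ((q n : ℝ) - Real.sqrt 2 * (p n : ℝ)) * ((q n : ℝ) + Real.sqrt 2 * (p n : ℝ))
        = (-1:ℝ)^(n+1) := by
      linear_combination hpell - ((p n : ℝ))^2 * hsq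
    have h2 : |(q n : ℝ) - Real.sqrt 2 * (p n : ℝ)|
        = 1 / ((q n : ℝ) + Real.sqrt 2 * (p n : ℝ)) := by
      rw [eq_div_iff hpos.ne', ← abs_of_pos hpos, ← abs_mul, h1, abs_pow, abs_neg, abs_one,
        one_pow]
    have hrw : (q n : ℝ) / (p n) - Real.sqrt 2
        = ((q n : ℝ) - Real.sqrt 2 * (p n : ℝ)) / (p n : ℝ) := by
      field_simp
    rw [hrw, abs_div, abs_of_pos (by linarith : (0:ℝ) < (p n : ℝ)), h2, div_div]
    rw [div_le_div_iff₀ (by nlinarith) (by positivity)]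
    nlinarith
  have habs : Filter.Tendsto (fun n => |(q n : ℝ) / (p n) - Real.sqrt 2|) Filter.atTop
      (nhds 0) :=
    squeeze_zero (fun n => abs_nonneg _) key tendsto_one_div_add_atTop_nhds_zero_nat
  have hsub : Filter.Tendsto (fun n => (q n : ℝ) / (p n) - Real.sqrt 2) Filter.atTop
      (nhds 0) := by
    rw [tendsto_zero_iff_abs_tendsto_zero]
    exact habs
  have := hsub.add_const (Real.sqrt 2)
  simpa using this
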